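/- Assume moreover f' > 0 (hence g' < 0) on I. Then the mean curvature vector of the meridian surface of parabolic type satisfies, at every (u,v) ∈ I × J, H(u,v) = (κ̄(v)/(2f(u))) n₁(v) + (1/2)(κ_m(u) + f'(u)/(f(u)√(−2f'(u)g'(u)))) n₂(u,v), where κ_m(u) = (f'g'' − g'f'')/(−2f'g')^{3/2} and κ̄(v) = (φφ̈ − 2φ̇² − φ²)/(φ̇² + φ²)^{3/2}. -/

import Mathlib

/-!
In the pseudo-orthonormal frame `e₁, e₂, ξ₁, ξ₂` the Minkowski product reads
`aa' + bb' − cd' − dc'`. The surface `z` is linear in `(f, g)`, so `z_u` and `z_uu` are the same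
surface built from `(f', g')` and `(f'', g'')`; every product entering `H` is then a polynomial
identity modulo `sin² v + cos² v = 1`. The coefficients become `κ̄` and `κ_m` once
`x^{3/2} = x √x` and `√(−f'/(2g')) = f'/√(−2f'g')` are substituted.
-/

namespace MeridianParabolic

noncomputable section

/-- The Minkowski inner product of signature (3,1) on `ℝ⁴`:
`⟨x,y⟩ = x₁y₁ + x₂y₂ + x₃y₃ − x₄y₄`. -/
def mink (x y : Fin 4 → ℝ) : ℝ := x 0 * y 0 + x 1 * y 1 + x 2 * y 2 - x 3 * y 3

/-- The first standard basis vector `e₁`. -/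
def e1 : Fin 4 → ℝ := ![1, 0, 0, 0]

/-- The second standard basis vector `e₂`. -/
def e2 : Fin 4 → ℝ := ![0, 1, 0, 0]

/-- The lightlike vector `ξ₁ = (e₃ + e₄)/√2`. -/
def xi1 : Fin 4 → ℝ := ![0, 0, 1 / Real.sqrt 2, 1 / Real.sqrt 2]

/-- The lightlike vector `ξ₂ = (−e₃ + e₄)/√2`. -/
def xi2 : Fin 4 → ℝ := ![0, 0, -(1 / Real.sqrt 2), 1 / Real.sqrt 2]

/-- The meridian surface of parabolic type
`z(u,v) = fφ cos v · e₁ + fφ sin v · e₂ + (fφ²/2 + g) ξ₁ + f ξ₂`. -/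
def z (f g φ : ℝ → ℝ) (u v : ℝ) : Fin 4 → ℝ :=
  (f u * φ v * Real.cos v) • e1 + (f u * φ v * Real.sin v) • e2 +
    (f u * (φ v) ^ 2 / 2 + g u) • xi1 + f u • xi2

/-- The partial derivative `z_u`. -/
def zu (f g φ : ℝ → ℝ) (u v : ℝ) : Fin 4 → ℝ := deriv (fun t => z f g φ t v) u

/-- The partial derivative `z_v`. -/
def zv (f g φ : ℝ → ℝ) (u v : ℝ) : Fin 4 → ℝ := deriv (fun t => z f g φ u t) v

/-- The second partial derivative `z_uu`. -/
def zuu (f g φ : ℝ → ℝ) (u v : ℝ) : Fin 4 → ℝ := deriv (fun t => zu f g φ t v) u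

/-- The second partial derivative `z_uv`. -/
def zuv (f g φ : ℝ → ℝ) (u v : ℝ) : Fin 4 → ℝ := deriv (fun t => zu f g φ u t) v

/-- The second partial derivative `z_vv`. -/
def zvv (f g φ : ℝ → ℝ) (u v : ℝ) : Fin 4 → ℝ := deriv (fun t => zv f g φ u t) v

/-- The normal field `n₁ = ((φ̇ sin v + φ cos v) e₁ + (−φ̇ cos v + φ sin v) e₂ + φ² ξ₁)/√(φ̇² + φ²)`. -/
def n1 (φ : ℝ → ℝ) (v : ℝ) : Fin 4 → ℝ :=
  (Real.sqrt ((deriv φ v) ^ 2 + (φ v) ^ 2))⁻¹ •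
    ((deriv φ v * Real.sin v + φ v * Real.cos v) • e1 +
      (-(deriv φ v) * Real.cos v + φ v * Real.sin v) • e2 + (φ v) ^ 2 • xi1)

/-- The normal field `n₂ = √(−f'/(2g')) (φ cos v e₁ + φ sin v e₂ + ((f'φ² − 2g')/(2f')) ξ₁ + ξ₂)`. -/
def n2 (f g φ : ℝ → ℝ) (u v : ℝ) : Fin 4 → ℝ :=
  Real.sqrt (-(deriv f u) / (2 * deriv g u)) •
    ((φ v * Real.cos v) • e1 + (φ v * Real.sin v) • e2 +
      ((deriv f u * (φ v) ^ 2 - 2 * deriv g u) / (2 * deriv f u)) • xi1 + xi2)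

/-- The curvature `κ_m(u) = (f'g'' − g'f'')/(−2f'g')^{3/2}` of the meridians. -/
def kappam (f g : ℝ → ℝ) (u : ℝ) : ℝ :=
  (deriv f u * deriv (deriv g) u - deriv g u * deriv (deriv f) u) /
    (-2 * deriv f u * deriv g u) ^ ((3 : ℝ) / 2)

/-- The curvature `κ̄(v) = (φφ̈ − 2φ̇² − φ²)/(φ̇² + φ²)^{3/2}`. -/
def kappabar (φ : ℝ → ℝ) (v : ℝ) : ℝ :=
  (φ v * deriv (deriv φ) v - 2 * (deriv φ v) ^ 2 - (φ v) ^ 2) /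
    ((deriv φ v) ^ 2 + (φ v) ^ 2) ^ ((3 : ℝ) / 2)

/-- The mean curvature vector
`H = (1/2)(⟨z_uu,n₁⟩/E + ⟨z_vv,n₁⟩/G) n₁ − (1/2)(⟨z_uu,n₂⟩/E + ⟨z_vv,n₂⟩/G) n₂`,
where `E = ⟨z_u,z_u⟩` and `G = ⟨z_v,z_v⟩`. -/
def Hvec (f g φ : ℝ → ℝ) (u v : ℝ) : Fin 4 → ℝ :=
  (1 / 2 * (mink (zuu f g φ u v) (n1 φ v) / mink (zu f g φ u v) (zu f g φ u v) +
      mink (zvv f g φ u v) (n1 φ v) / mink (zv f g φ u v) (zv f g φ u v))) • n1 φ v -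
  (1 / 2 * (mink (zuu f g φ u v) (n2 f g φ u v) / mink (zu f g φ u v) (zu f g φ u v) +
      mink (zvv f g φ u v) (n2 f g φ u v) / mink (zv f g φ u v) (zv f g φ u v))) • n2 f g φ u v

open Real Topology

theorem rpow_three_halves_eq_mul_sqrt {x : ℝ} (hx : 0 ≤ x) :
    x ^ ((3 : ℝ) / 2) = x * √x := by
  rw [show (3 : ℝ) / 2 = 1 + 1 / 2 by norm_num, rpow_add' hx (by norm_num), rpow_one,
    sqrt_eq_rpow]

theorem sqrt_neg_div_two_mul {a b : ℝ} (ha : 0 < a) (hb : b < 0) :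
    √(-a / (2 * b)) = a / √(-2 * a * b) := by
  have hab : 0 < -2 * a * b := by nlinarith
  rw [eq_div_iff (sqrt_pos.mpr hab).ne',
    ← sqrt_mul (div_nonneg_of_nonpos (by linarith) (by linarith)),
    show -a / (2 * b) * (-2 * a * b) = a ^ 2 by field_simp [hb.ne], sqrt_sq ha.le]

def frameVec (a b c d : ℝ) : Fin 4 → ℝ := a • e1 + b • e2 + c • xi1 + d • xi2

theorem mink_frameVec (a b c d a' b' c' d' : ℝ) :
    mink (frameVec a b c d) (frameVec a' b' c' d') = a * a' + b * b' - c * d' - d * c' := by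
  have h2 : √2 ^ 2 = 2 := sq_sqrt zero_le_two
  simp only [mink, frameVec, e1, e2, xi1, xi2, Matrix.smul_cons, smul_eq_mul, mul_one, mul_zero,
    Matrix.smul_empty, Matrix.add_cons, Matrix.head_cons, add_zero, Matrix.tail_cons, zero_add,
    Matrix.empty_add_empty, one_div, mul_neg, Fin.isValue, Pi.add_apply, Matrix.cons_val_zero,
    Matrix.cons_val_one, Matrix.cons_val]
  field_simp
  linear_combination (c * d' + d * c') * h2

theorem hasDerivAt_frameVec {a b c d : ℝ → ℝ} {a' b' c' d' x : ℝ}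
    (ha : HasDerivAt a a' x) (hb : HasDerivAt b b' x)
    (hc : HasDerivAt c c' x) (hd : HasDerivAt d d' x) :
    HasDerivAt (fun t => frameVec (a t) (b t) (c t) (d t)) (frameVec a' b' c' d') x :=
  (((ha.smul_const e1).add (hb.smul_const e2)).add (hc.smul_const xi1)).add (hd.smul_const xi2)

section Surface

variable {f g φ : ℝ → ℝ} {u v : ℝ}

theorem z_eq_frameVec (f g φ : ℝ → ℝ) (u v : ℝ) :
    z f g φ u v =
      frameVec (f u * φ v * cos v) (f u * φ v * sin v) (f u * φ v ^ 2 / 2 + g u) (f u) :=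
  rfl

theorem n1_eq_frameVec (φ : ℝ → ℝ) (v : ℝ) :
    n1 φ v =
      frameVec ((√(deriv φ v ^ 2 + φ v ^ 2))⁻¹ * (deriv φ v * sin v + φ v * cos v))
        ((√(deriv φ v ^ 2 + φ v ^ 2))⁻¹ * (-deriv φ v * cos v + φ v * sin v))
        ((√(deriv φ v ^ 2 + φ v ^ 2))⁻¹ * φ v ^ 2) 0 := by
  unfold n1 frameVec
  module

theorem n2_eq_frameVec (f g φ : ℝ → ℝ) (u v : ℝ) :
    n2 f g φ u v =
      frameVec (√(-deriv f u / (2 * deriv g u)) * (φ v * cos v))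
        (√(-deriv f u / (2 * deriv g u)) * (φ v * sin v))
        (√(-deriv f u / (2 * deriv g u)) *
          ((deriv f u * φ v ^ 2 - 2 * deriv g u) / (2 * deriv f u)))
        (√(-deriv f u / (2 * deriv g u))) := by
  unfold n2 frameVec
  module

theorem zu_eq (hf : DifferentiableAt ℝ f u) (hg : DifferentiableAt ℝ g u) :
    zu f g φ u v = z (deriv f) (deriv g) φ u v :=
  (hasDerivAt_frameVec ((hf.hasDerivAt.mul_const _).mul_const _)
    ((hf.hasDerivAt.mul_const _).mul_const _)
    ((hf.hasDerivAt.mul_const _).div_const 2 |>.add hg.hasDerivAt) hf.hasDerivAt).deriv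

theorem zuu_eq (hf : ContDiffAt ℝ 2 f u) (hg : ContDiffAt ℝ 2 g u) :
    zuu f g φ u v = z (deriv (deriv f)) (deriv (deriv g)) φ u v := by
  have hzu : (fun t => zu f g φ t v) =ᶠ[𝓝 u] fun t => z (deriv f) (deriv g) φ t v := by
    filter_upwards [hf.eventually (by simp), hg.eventually (by simp)] with t hft hgt
    exact zu_eq (hft.differentiableAt two_ne_zero) (hgt.differentiableAt two_ne_zero)
  rw [zuu, hzu.deriv_eq]
  exact zu_eq ((hf.derivWithin (m := 1) le_rfl).differentiableAt one_ne_zero)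
    ((hg.derivWithin (m := 1) le_rfl).differentiableAt one_ne_zero)

theorem hasDerivAt_z_snd {φ' : ℝ} (hφ : HasDerivAt φ φ' v) :
    HasDerivAt (fun t => z f g φ u t)
      (frameVec (f u * (φ' * cos v - φ v * sin v)) (f u * (φ' * sin v + φ v * cos v))
        (f u * (φ v * φ')) 0) v :=
  hasDerivAt_frameVec
    (((hφ.const_mul (f u)).mul (hasDerivAt_cos v)).congr_deriv (by ring))
    (((hφ.const_mul (f u)).mul (hasDerivAt_sin v)).congr_deriv (by ring))
    ((((hφ.pow 2).const_mul (f u)).div_const 2 |>.add_const (g u)).congr_deriv (by ring))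
    (hasDerivAt_const v (f u))

theorem zv_eq (hφ : DifferentiableAt ℝ φ v) :
    zv f g φ u v =
      frameVec (f u * (deriv φ v * cos v - φ v * sin v))
        (f u * (deriv φ v * sin v + φ v * cos v)) (f u * (φ v * deriv φ v)) 0 :=
  (hasDerivAt_z_snd hφ.hasDerivAt).deriv

theorem zvv_eq (hφ : ContDiffAt ℝ 2 φ v) :
    zvv f g φ u v =
      frameVec (f u * (deriv (deriv φ) v * cos v - 2 * deriv φ v * sin v - φ v * cos v))
        (f u * (deriv (deriv φ) v * sin v + 2 * deriv φ v * cos v - φ v * sin v))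
        (f u * (deriv φ v ^ 2 + φ v * deriv (deriv φ) v)) 0 := by
  have h1 : HasDerivAt φ (deriv φ v) v := (hφ.differentiableAt two_ne_zero).hasDerivAt
  have h2 : HasDerivAt (deriv φ) (deriv (deriv φ) v) v :=
    ((hφ.derivWithin (m := 1) le_rfl).differentiableAt one_ne_zero).hasDerivAt
  have hzv : (fun t => zv f g φ u t) =ᶠ[𝓝 v] fun t =>
      frameVec (f u * (deriv φ t * cos t - φ t * sin t))
        (f u * (deriv φ t * sin t + φ t * cos t)) (f u * (φ t * deriv φ t)) 0 := by
    filter_upwards [hφ.eventually (by simp)] with t ht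
    exact zv_eq (ht.differentiableAt two_ne_zero)
  rw [zvv, hzv.deriv_eq]
  refine (hasDerivAt_frameVec ?_ ?_ ?_ (hasDerivAt_const v 0)).deriv
  · exact (((h2.mul (hasDerivAt_cos v)).sub (h1.mul (hasDerivAt_sin v))).const_mul
      (f u)).congr_deriv (by ring)
  · exact (((h2.mul (hasDerivAt_sin v)).add (h1.mul (hasDerivAt_cos v))).const_mul
      (f u)).congr_deriv (by ring)
  · exact ((h1.mul h2).const_mul (f u)).congr_deriv (by ring)

theorem mink_z_self (f g φ : ℝ → ℝ) (u v : ℝ) :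
    mink (z f g φ u v) (z f g φ u v) = -2 * f u * g u := by
  rw [z_eq_frameVec, mink_frameVec]
  linear_combination (f u ^ 2 * φ v ^ 2) * sin_sq_add_cos_sq v

theorem mink_z_n1 (f g φ : ℝ → ℝ) (u v : ℝ) : mink (z f g φ u v) (n1 φ v) = 0 := by
  rw [z_eq_frameVec, n1_eq_frameVec, mink_frameVec]
  linear_combination ((√(deriv φ v ^ 2 + φ v ^ 2))⁻¹ * f u * φ v ^ 2) * sin_sq_add_cos_sq v

theorem mink_z_n2 (F G : ℝ → ℝ) (hf : deriv f u ≠ 0) :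
    mink (z F G φ u v) (n2 f g φ u v) =
      √(-deriv f u / (2 * deriv g u)) * (F u * deriv g u / deriv f u - G u) := by
  rw [z_eq_frameVec, n2_eq_frameVec, mink_frameVec]
  generalize √(-deriv f u / (2 * deriv g u)) = s
  field_simp
  linear_combination (2 * s * deriv f u * F u * φ v ^ 2) * sin_sq_add_cos_sq v

theorem mink_zv_self (hφ : DifferentiableAt ℝ φ v) :
    mink (zv f g φ u v) (zv f g φ u v) = f u ^ 2 * (deriv φ v ^ 2 + φ v ^ 2) := by
  rw [zv_eq hφ, mink_frameVec]
  linear_combination (f u ^ 2 * (deriv φ v ^ 2 + φ v ^ 2)) * sin_sq_add_cos_sq v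

theorem mink_zvv_n1 (hφ : ContDiffAt ℝ 2 φ v) :
    mink (zvv f g φ u v) (n1 φ v) =
      f u * (φ v * deriv (deriv φ) v - 2 * deriv φ v ^ 2 - φ v ^ 2) /
        √(deriv φ v ^ 2 + φ v ^ 2) := by
  rw [zvv_eq hφ, n1_eq_frameVec, mink_frameVec, div_eq_mul_inv]
  linear_combination ((√(deriv φ v ^ 2 + φ v ^ 2))⁻¹ * f u *
    (φ v * deriv (deriv φ) v - 2 * deriv φ v ^ 2 - φ v ^ 2)) * sin_sq_add_cos_sq v

theorem mink_zvv_n2 (hφ : ContDiffAt ℝ 2 φ v) :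
    mink (zvv f g φ u v) (n2 f g φ u v) =
      -(√(-deriv f u / (2 * deriv g u)) * f u * (deriv φ v ^ 2 + φ v ^ 2)) := by
  rw [zvv_eq hφ, n2_eq_frameVec, mink_frameVec]
  linear_combination (√(-deriv f u / (2 * deriv g u)) * f u * φ v *
    (deriv (deriv φ) v - φ v)) * sin_sq_add_cos_sq v

end Surface

theorem statement6_general
    (I J : Set ℝ) (hIopen : IsOpen I)
    (hJopen : IsOpen J)
    (f g φ : ℝ → ℝ)
    (hf : ContDiffOn ℝ (⊤ : ℕ∞) f I) (hg : ContDiffOn ℝ (⊤ : ℕ∞) g I)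
    (hφ : ContDiffOn ℝ (⊤ : ℕ∞) φ J)
    (hfpos : ∀ u ∈ I, 0 < f u)
    (hφpos : ∀ v ∈ J, 0 < (deriv φ v) ^ 2 + (φ v) ^ 2)
    (hfd : ∀ u ∈ I, 0 < deriv f u) (hgd : ∀ u ∈ I, deriv g u < 0) :
    ∀ u ∈ I, ∀ v ∈ J,
      Hvec f g φ u v =
        (kappabar φ v / (2 * f u)) • n1 φ v +
          (1 / 2 * (kappam f g u +
              deriv f u / (f u * Real.sqrt (-2 * deriv f u * deriv g u)))) •
            n2 f g φ u v := by
  intro u hu v hv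
  have hf2 : ContDiffAt ℝ 2 f u := (hf.contDiffAt (hIopen.mem_nhds hu)).of_le (by norm_cast)
  have hg2 : ContDiffAt ℝ 2 g u := (hg.contDiffAt (hIopen.mem_nhds hu)).of_le (by norm_cast)
  have hφ2 : ContDiffAt ℝ 2 φ v := (hφ.contDiffAt (hJopen.mem_nhds hv)).of_le (by norm_cast)
  have hf' := hfd u hu
  have hg' := hgd u hu
  have hfu := hfpos u hu
  have hX := hφpos v hv
  have hE : 0 < -2 * deriv f u * deriv g u := by nlinarith
  rw [Hvec, zu_eq (hf2.differentiableAt two_ne_zero) (hg2.differentiableAt two_ne_zero),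
    zuu_eq hf2 hg2, mink_z_self, mink_z_n1, mink_z_n2 _ _ hf'.ne',
    mink_zv_self (hφ2.differentiableAt two_ne_zero), mink_zvv_n1 hφ2, mink_zvv_n2 hφ2,
    sub_eq_add_neg, ← neg_smul, kappabar, kappam, rpow_three_halves_eq_mul_sqrt hX.le,
    rpow_three_halves_eq_mul_sqrt hE.le, sqrt_neg_div_two_mul hf' hg']
  have hsX := sqrt_pos.mpr hX
  have hsE := sqrt_pos.mpr hE
  congr 2
  · field_simp
    ring
  · field_simp
    ring

/-- assuming `f' > 0` (hence `g' < 0`), the mean curvature vector of the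
meridian surface of parabolic type satisfies
`H = (κ̄/(2f)) n₁ + (1/2)(κ_m + f'/(f√(−2f'g'))) n₂`. -/
theorem statement6
    (I J : Set ℝ) (hIopen : IsOpen I) (hIconn : IsPreconnected I)
    (hJopen : IsOpen J) (hJconn : IsPreconnected J)
    (f g φ : ℝ → ℝ)
    (hf : ContDiffOn ℝ (⊤ : ℕ∞) f I) (hg : ContDiffOn ℝ (⊤ : ℕ∞) g I)
    (hφ : ContDiffOn ℝ (⊤ : ℕ∞) φ J)
    (hfpos : ∀ u ∈ I, 0 < f u)
    (hfg : ∀ u ∈ I, 0 < -(deriv f u * deriv g u))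
    (hφpos : ∀ v ∈ J, 0 < (deriv φ v) ^ 2 + (φ v) ^ 2)
    (hfd : ∀ u ∈ I, 0 < deriv f u) (hgd : ∀ u ∈ I, deriv g u < 0) :
    ∀ u ∈ I, ∀ v ∈ J,
      Hvec f g φ u v =
        (kappabar φ v / (2 * f u)) • n1 φ v +
          (1 / 2 * (kappam f g u +
              deriv f u / (f u * Real.sqrt (-2 * deriv f u * deriv g u)))) •
            n2 f g φ u v :=
  statement6_general I J hIopen hJopen f g φ hf hg hφ hfpos hφpos hfd hgd

end
end MeridianParabolic
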